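/- Explicit solutions of Hamilton's equations in the three-dimensional Grushin space: fix integers α, β ≥ 1 and let s_α, s_β be generalized sine functions of orders α and β respectively. Let A₁, A₂, ω₁, ω₂, φ₁, φ₂, w₀, z₀ be real numbers with A₁ ≠ 0, A₂ ≠ 0, satisfying ω₂² = A₂^{2(β−1)}·w₀² and ω₁² = A₁^{2(α−1)}·A₂^{2β}·w₀². Define on ℝ: x(t) := A₁·s_α(ω₁t + φ₁), u(t) := A₁ω₁·s_α'(ω₁t + φ₁), I(t) := ∫₀^t x(r)^{2α} dr, y(t) := A₂·s_β(ω₂·I(t) + φ₂), v(t) := A₂ω₂·s_β'(ω₂·I(t) + φ₂), w(t) := w₀, z(t) := z₀ + w₀·∫₀^t x(r)^{2α}·y(r)^{2β} dr. Then (x, y, z, u, v, w) satisfies Hamilton's equations x' = u, y' = x^{2α}v, z' = x^{2α}y^{2β}w, u' = −α·x^{2α−1}(v² + y^{2β}w²), v' = −β·x^{2α}y^{2β−1}w², w' = 0 on all of ℝ. -/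

import Mathlib

/-- A generalized sine function of order `m ≥ 1`: a twice continuously differentiable
function `s : ℝ → ℝ` with `s'' = -m * s^(2m-1)`, `s 0 = 0` and `s' 0 = 1`. -/
def IsGenSine (m : ℕ) (s : ℝ → ℝ) : Prop :=
  ContDiff ℝ 2 s ∧ (∀ x : ℝ, deriv (deriv s) x = -(m : ℝ) * s x ^ (2 * m - 1)) ∧
    s 0 = 0 ∧ deriv s 0 = 1

lemma genSine_energy (m : ℕ) (hm : 1 ≤ m) (s : ℝ → ℝ) (hs : IsGenSine m s) :
    ∀ x : ℝ, deriv s x ^ 2 + s x ^ (2 * m) = 1 := by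
  obtain ⟨hcd, hode, h0, h1⟩ := hs
  have hds : Differentiable ℝ s := hcd.differentiable (by norm_num)
  have hds' : Differentiable ℝ (deriv s) :=
    ((contDiff_succ_iff_deriv.mp (show ContDiff ℝ (1+1) s from by norm_num [hcd])).2.2).differentiable (by norm_num)
  have hE : ∀ x : ℝ, HasDerivAt (fun x => deriv s x ^ 2 + s x ^ (2 * m)) 0 x := by
    intro x
    have h1' := ((hds' x).hasDerivAt).pow 2
    have h2' := ((hds x).hasDerivAt).pow (2 * m)
    have := h1'.add h2'
    refine this.congr_deriv ?_
    rw [hode x]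
    have : s x ^ (2 * m - 1 + 1) = s x ^ (2 * m) := by congr 1; omega
    push_cast
    nlinarith [this, pow_succ (s x) (2 * m - 1)]
  intro x
  have hc : (fun x => deriv s x ^ 2 + s x ^ (2 * m)) x
      = (fun x => deriv s x ^ 2 + s x ^ (2 * m)) 0 :=
    is_const_of_deriv_eq_zero (fun y => (hE y).differentiableAt)
      (fun y => (hE y).deriv) x 0
  simpa [h0, h1, zero_pow (by omega : 2 * m ≠ 0)] using hc

/-- explicit solutions of Hamilton's equations in the
three-dimensional Grushin space `𝔾³_{(α,β)}`. -/
theorem grushin3D_hamilton_solution (α β : ℕ) (hα : 1 ≤ α) (hβ : 1 ≤ β)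
    (sa sb : ℝ → ℝ) (hsa : IsGenSine α sa) (hsb : IsGenSine β sb)
    (A₁ A₂ ω₁ ω₂ φ₁ φ₂ w₀ z₀ : ℝ) (hA₁ : A₁ ≠ 0) (hA₂ : A₂ ≠ 0)
    (hω₂ : ω₂ ^ 2 = A₂ ^ (2 * (β - 1)) * w₀ ^ 2)
    (hω₁ : ω₁ ^ 2 = A₁ ^ (2 * (α - 1)) * A₂ ^ (2 * β) * w₀ ^ 2) :
    let x : ℝ → ℝ := fun t => A₁ * sa (ω₁ * t + φ₁)
    let u : ℝ → ℝ := fun t => A₁ * ω₁ * deriv sa (ω₁ * t + φ₁)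
    let I : ℝ → ℝ := fun t => ∫ r in (0:ℝ)..t, x r ^ (2 * α)
    let y : ℝ → ℝ := fun t => A₂ * sb (ω₂ * I t + φ₂)
    let v : ℝ → ℝ := fun t => A₂ * ω₂ * deriv sb (ω₂ * I t + φ₂)
    let w : ℝ → ℝ := fun _ => w₀
    let z : ℝ → ℝ := fun t => z₀ + w₀ * ∫ r in (0:ℝ)..t, x r ^ (2 * α) * y r ^ (2 * β)
    ∀ t : ℝ,
      HasDerivAt x (u t) t ∧
      HasDerivAt y (x t ^ (2 * α) * v t) t ∧
      HasDerivAt z (x t ^ (2 * α) * y t ^ (2 * β) * w t) t ∧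
      HasDerivAt u (-(α : ℝ) * x t ^ (2 * α - 1) * (v t ^ 2 + y t ^ (2 * β) * w t ^ 2)) t ∧
      HasDerivAt v (-(β : ℝ) * x t ^ (2 * α) * y t ^ (2 * β - 1) * w t ^ 2) t ∧
      HasDerivAt w 0 t := by
  obtain ⟨hcda, hodea, ha0, ha1⟩ := hsa
  obtain ⟨hcdb, hodeb, hb0, hb1⟩ := hsb
  have hdsa : Differentiable ℝ sa := hcda.differentiable (by norm_num)
  have hdsa' : Differentiable ℝ (deriv sa) :=
    ((contDiff_succ_iff_deriv.mp (show ContDiff ℝ (1+1) sa from by norm_num [hcda])).2.2).differentiable (by norm_num)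
  have hdsb : Differentiable ℝ sb := hcdb.differentiable (by norm_num)
  have hdsb' : Differentiable ℝ (deriv sb) :=
    ((contDiff_succ_iff_deriv.mp (show ContDiff ℝ (1+1) sb from by norm_num [hcdb])).2.2).differentiable (by norm_num)
  have hEb := genSine_energy β hβ sb ⟨hcdb, hodeb, hb0, hb1⟩
  -- scalar keys
  have key1 : A₁ * ω₁ ^ 2 = A₁ ^ (2 * α - 1) * (A₂ ^ (2 * β) * w₀ ^ 2) := by
    rw [hω₁]
    have : A₁ * A₁ ^ (2 * (α - 1)) = A₁ ^ (2 * α - 1) := by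
      rw [← pow_succ']; congr 1; omega
    linear_combination (A₂ ^ (2 * β) * w₀ ^ 2) * this
  have key2 : A₂ ^ 2 * ω₂ ^ 2 = A₂ ^ (2 * β) * w₀ ^ 2 := by
    rw [hω₂, ← mul_assoc, ← pow_add]; congr 2; omega
  have key3 : A₂ * ω₂ ^ 2 = A₂ ^ (2 * β - 1) * w₀ ^ 2 := by
    rw [hω₂, ← mul_assoc, ← pow_succ']; congr 2; omega
  intro x u I y v w z t
  -- derivative of x at arbitrary point
  have haff : ∀ r : ℝ, HasDerivAt (fun t : ℝ => ω₁ * t + φ₁) ω₁ r := by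
    intro r
    simpa using ((hasDerivAt_id r).const_mul ω₁).add_const φ₁
  have hx : ∀ r : ℝ, HasDerivAt x (A₁ * (deriv sa (ω₁ * r + φ₁) * ω₁)) r := by
    intro r
    exact (((hdsa _).hasDerivAt).comp r (haff r)).const_mul A₁
  have contx : Continuous x := continuous_const.mul (hdsa.continuous.comp (by continuity))
  have hI : ∀ r : ℝ, HasDerivAt I (x r ^ (2 * α)) r := by
    intro r
    exact intervalIntegral.integral_hasDerivAt_right
      ((contx.pow _).intervalIntegrable _ _)
      ((contx.pow _).stronglyMeasurableAtFilter _ _) (contx.pow _).continuousAt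
  have contI : Continuous I := by
    have : Differentiable ℝ I := fun r => (hI r).differentiableAt
    exact this.continuous
  have hq : ∀ r : ℝ, HasDerivAt (fun t => ω₂ * I t + φ₂) (ω₂ * x r ^ (2 * α)) r := by
    intro r
    exact ((hI r).const_mul ω₂).add_const φ₂
  have hy : ∀ r : ℝ, HasDerivAt y
      (A₂ * (deriv sb (ω₂ * I r + φ₂) * (ω₂ * x r ^ (2 * α)))) r := by
    intro r
    exact (((hdsb _).hasDerivAt).comp r (hq r)).const_mul A₂
  have conty : Continuous y := continuous_const.mul (hdsb.continuous.comp (by continuity))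
  refine ⟨?_, ?_, ?_, ?_, ?_, hasDerivAt_const t w₀⟩
  · -- x' = u
    convert hx t using 1
    show A₁ * ω₁ * deriv sa (ω₁ * t + φ₁) = _
    ring
  · -- y' = x^{2α} v
    convert hy t using 1
    show x t ^ (2 * α) * (A₂ * ω₂ * deriv sb (ω₂ * I t + φ₂)) = _
    ring
  · -- z'
    have contf : Continuous fun r => x r ^ (2 * α) * y r ^ (2 * β) :=
      (contx.pow _).mul (conty.pow _)
    have hint : HasDerivAt (fun b => ∫ r in (0:ℝ)..b, x r ^ (2 * α) * y r ^ (2 * β))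
        (x t ^ (2 * α) * y t ^ (2 * β)) t :=
      intervalIntegral.integral_hasDerivAt_right (contf.intervalIntegrable _ _)
        (contf.stronglyMeasurableAtFilter _ _) contf.continuousAt
    refine ((hint.const_mul w₀).const_add z₀).congr_deriv ?_
    show _ = x t ^ (2 * α) * y t ^ (2 * β) * w₀
    ring
  · -- u'
    have hu : HasDerivAt u
        (A₁ * ω₁ * (deriv (deriv sa) (ω₁ * t + φ₁) * ω₁)) t :=
      (((hdsa' _).hasDerivAt).comp t (haff t)).const_mul (A₁ * ω₁)
    have hbr : v t ^ 2 + y t ^ (2 * β) * w t ^ 2 = A₂ ^ (2 * β) * w₀ ^ 2 := by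
      show (A₂ * ω₂ * deriv sb (ω₂ * I t + φ₂)) ^ 2
          + (A₂ * sb (ω₂ * I t + φ₂)) ^ (2 * β) * w₀ ^ 2 = _
      rw [mul_pow, mul_pow]
      linear_combination (deriv sb (ω₂ * I t + φ₂)) ^ 2 * key2
        + (A₂ ^ (2 * β) * w₀ ^ 2) * (hEb (ω₂ * I t + φ₂))
    convert hu using 1
    rw [hbr, hodea (ω₁ * t + φ₁)]
    show -(α : ℝ) * (A₁ * sa (ω₁ * t + φ₁)) ^ (2 * α - 1) * (A₂ ^ (2 * β) * w₀ ^ 2) = _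
    rw [mul_pow]
    linear_combination ((α:ℝ) * sa (ω₁ * t + φ₁) ^ (2 * α - 1)) * key1
  · -- v'
    have hv : HasDerivAt v
        (A₂ * ω₂ * (deriv (deriv sb) (ω₂ * I t + φ₂) * (ω₂ * x t ^ (2 * α)))) t :=
      (((hdsb' _).hasDerivAt).comp t (hq t)).const_mul (A₂ * ω₂)
    convert hv using 1
    rw [hodeb (ω₂ * I t + φ₂)]
    show -(β : ℝ) * x t ^ (2 * α) * (A₂ * sb (ω₂ * I t + φ₂)) ^ (2 * β - 1) * w₀ ^ 2 = _
    rw [mul_pow]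
    linear_combination ((β:ℝ) * x t ^ (2 * α) * sb (ω₂ * I t + φ₂) ^ (2 * β - 1)) * key3
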